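/- Let σ ∈ {1,−1}, n ≥ 2, m > 0 and r > 0, and assume r < 1 in case σ = 1. Set α_i = 2π(i−1)/n for i = 1,…,n and z = √(1 − σr²). Then there exists a constant A > 0 such that the curves q_i(t) = (r·cos(At+α_i), r·sin(At+α_i), 0, z), i = 1,…,n, form a solution of the curved n-body problem with all n masses equal to m; in particular, polygonal positive elliptic (σ=1) and negative elliptic (σ=−1) relative equilibria with equal masses and with q_{i3}, q_{i4} independent of i exist for every n ≥ 2. -/

import Mathlib

/-!
Write `c = cos (ψ - φ)` for two bodies at angles `φ`, `ψ` on the circle of radius `r` at height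
`(0, z)`, where `z ^ 2 + σ r ^ 2 = 1` puts the circle on `M³_σ`. Then `q_i ⊙ q_j = r²c + σz²`
depends on `c` alone, and the numerator `q_j - σ (q_i ⊙ q_j) q_i` of a pairwise force is
`(1 - c)` times a vector depending on `q_i` only, plus `sin (ψ - φ)` times the tangent vector of
the circle at `q_i`. For a regular `n`-gon the tangential parts cancel under the reflection
`j ↦ 2i - j`, and the weighted sum `S` of the `1 - c` parts is the same for every body. Rotating
with `A² = S` (`A > 0` since every term of `S` is positive) then balances the centripetal
acceleration together with the term `-σ (q_i' ⊙ q_i') q_i`.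
-/

open Real Finset

/-- The "curved inner product" `x ⊙ y = x₁y₁ + x₂y₂ + x₃y₃ + σx₄y₄` on `ℝ⁴`. -/
noncomputable def odot (σ : ℝ) (x y : Fin 4 → ℝ) : ℝ :=
  x 0 * y 0 + x 1 * y 1 + x 2 * y 2 + σ * x 3 * y 3

noncomputable section

def latitudePoint (r z φ : ℝ) : Fin 4 → ℝ :=
  ![r * cos φ, r * sin φ, 0, z]

section Latitude

variable {σ r z : ℝ}

theorem odot_latitudePoint (φ ψ : ℝ) :
    odot σ (latitudePoint r z φ) (latitudePoint r z ψ) = r ^ 2 * cos (ψ - φ) + σ * z ^ 2 := by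
  simp only [odot, latitudePoint, Matrix.cons_val_zero, Matrix.cons_val_one, Matrix.cons_val,
    cos_sub]
  ring

theorem odot_latitudePoint_self (hσ : σ ^ 2 = 1) (hz : z ^ 2 + σ * r ^ 2 = 1) (φ : ℝ) :
    odot σ (latitudePoint r z φ) (latitudePoint r z φ) = σ := by
  rw [odot_latitudePoint, sub_self, cos_zero]
  linear_combination σ * hz - r ^ 2 * hσ

theorem hasDerivAt_latitudePoint (A c t : ℝ) (k : Fin 4) :
    HasDerivAt (fun s => latitudePoint r z (A * s + c) k)
      (latitudePoint (A * r) 0 (A * t + (c + π / 2)) k) t := by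
  have hlin : HasDerivAt (fun s => A * s + c) A t := by
    simpa using ((hasDerivAt_id t).const_mul A).add_const c
  fin_cases k <;> simp only [latitudePoint, ← add_assoc, cos_add_pi_div_two, sin_add_pi_div_two]
  · exact ((hasDerivAt_cos _).comp t hlin |>.const_mul r).congr_deriv (by simp; ring)
  · exact ((hasDerivAt_sin _).comp t hlin |>.const_mul r).congr_deriv (by simp; ring)
  · simpa using hasDerivAt_const t (0 : ℝ)
  · simpa using hasDerivAt_const t z

theorem deriv_latitudePoint (A c : ℝ) (k : Fin 4) :
    deriv (fun s => latitudePoint r z (A * s + c) k) =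
      fun t => latitudePoint (A * r) 0 (A * t + (c + π / 2)) k :=
  funext fun t => (hasDerivAt_latitudePoint A c t k).deriv

theorem deriv_deriv_latitudePoint (A c t : ℝ) (k : Fin 4) :
    deriv (deriv fun s => latitudePoint r z (A * s + c) k) t =
      -A ^ 2 * latitudePoint r 0 (A * t + c) k := by
  rw [deriv_latitudePoint, (hasDerivAt_latitudePoint (z := 0) A _ t k).deriv,
    show A * t + (c + π / 2 + π / 2) = A * t + c + π by ring]
  fin_cases k <;>
    simp only [latitudePoint, Matrix.cons_val_zero, Matrix.cons_val_one, Matrix.cons_val,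
      Fin.zero_eta, Fin.mk_one, Fin.reduceFinMk, cos_add_pi, sin_add_pi] <;> ring

theorem latitudePoint_sub_odot_mul (hσ : σ ^ 2 = 1) (hz : z ^ 2 + σ * r ^ 2 = 1)
    (φ ψ : ℝ) (k : Fin 4) :
    latitudePoint r z ψ k - σ * odot σ (latitudePoint r z φ) (latitudePoint r z ψ) *
        latitudePoint r z φ k =
      (1 - cos (ψ - φ)) * (σ * r ^ 2 * latitudePoint r z φ k - latitudePoint r 0 φ k) +
        sin (ψ - φ) * latitudePoint r 0 (φ + π / 2) k := by
  rw [odot_latitudePoint]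
  obtain ⟨δ, rfl⟩ : ∃ δ, ψ = φ + δ := ⟨ψ - φ, by ring⟩
  simp only [add_sub_cancel_left]
  fin_cases k <;>
    simp only [latitudePoint, Matrix.cons_val_zero, Matrix.cons_val_one, Matrix.cons_val,
      Fin.zero_eta, Fin.mk_one, Fin.reduceFinMk, cos_add, sin_add, cos_pi_div_two, sin_pi_div_two]
  · linear_combination -(r * cos φ * z ^ 2) * hσ - r * cos φ * hz
  · linear_combination -(r * sin φ * z ^ 2) * hσ - r * sin φ * hz
  · ring
  · linear_combination -z ^ 3 * hσ - z * hz

theorem sub_mul_sq_pos_of_lt_one (hσ : σ = 1 ∨ σ = -1) (hr : 0 < r) (hr1 : σ = 1 → r < 1)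
    (hz : z ^ 2 + σ * r ^ 2 = 1) {c : ℝ} (hc₁ : -1 ≤ c) (hc₂ : c < 1) :
    0 < σ - σ * (r ^ 2 * c + σ * z ^ 2) ^ 2 := by
  have hu : 0 < r ^ 2 * (1 - c) := by positivity
  rcases hσ with rfl | rfl
  · have : r ^ 2 * (1 - c) < 2 := by nlinarith [hr1 rfl]
    nlinarith
  · nlinarith

end Latitude

section Equations

variable {ι : Type*} [Fintype ι] [DecidableEq ι]

def curvedAcceleration (σ : ℝ) (m : ι → ℝ) (x v : ι → Fin 4 → ℝ) (i : ι) (k : Fin 4) : ℝ :=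
  (∑ j ∈ univ.erase i,
      m j * (x j k - σ * odot σ (x i) (x j) * x i k) /
        (σ - σ * (odot σ (x i) (x j)) ^ 2) ^ ((3 : ℝ) / 2))
    - σ * odot σ (v i) (v i) * x i k

def IsCurvedNBodySolution (σ : ℝ) (m : ι → ℝ) (q : ι → ℝ → Fin 4 → ℝ) : Prop :=
  ∀ i t k, deriv (deriv fun s => q i s k) t =
    curvedAcceleration σ m (fun j => q j t) (fun j l => deriv (fun s => q j s l) t) i k

theorem isCurvedNBodySolution_latitudePoint {σ r z A : ℝ} (hσ : σ ^ 2 = 1)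
    (hz : z ^ 2 + σ * r ^ 2 = 1) (m θ : ι → ℝ)
    (hsin : ∀ i, ∑ j ∈ univ.erase i, m j * sin (θ j - θ i) /
      (σ - σ * (r ^ 2 * cos (θ j - θ i) + σ * z ^ 2) ^ 2) ^ ((3 : ℝ) / 2) = 0)
    (hcos : ∀ i, ∑ j ∈ univ.erase i, m j * (1 - cos (θ j - θ i)) /
      (σ - σ * (r ^ 2 * cos (θ j - θ i) + σ * z ^ 2) ^ 2) ^ ((3 : ℝ) / 2) = A ^ 2) :
    IsCurvedNBodySolution σ m fun j s => latitudePoint r z (A * s + θ j) := by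
  intro i t k
  have hodot (j : ι) :
      odot σ (latitudePoint r z (A * t + θ i)) (latitudePoint r z (A * t + θ j)) =
        r ^ 2 * cos (θ j - θ i) + σ * z ^ 2 := by
    rw [odot_latitudePoint, add_sub_add_left_eq_sub]
  have hterm : ∀ j ∈ univ.erase i,
      m j * (latitudePoint r z (A * t + θ j) k - σ * odot σ (latitudePoint r z (A * t + θ i))
          (latitudePoint r z (A * t + θ j)) * latitudePoint r z (A * t + θ i) k) /
        (σ - σ * (odot σ (latitudePoint r z (A * t + θ i))
          (latitudePoint r z (A * t + θ j))) ^ 2) ^ ((3 : ℝ) / 2) =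
      (σ * r ^ 2 * latitudePoint r z (A * t + θ i) k - latitudePoint r 0 (A * t + θ i) k) *
          (m j * (1 - cos (θ j - θ i)) /
            (σ - σ * (r ^ 2 * cos (θ j - θ i) + σ * z ^ 2) ^ 2) ^ ((3 : ℝ) / 2)) +
        latitudePoint r 0 (A * t + θ i + π / 2) k * (m j * sin (θ j - θ i) /
            (σ - σ * (r ^ 2 * cos (θ j - θ i) + σ * z ^ 2) ^ 2) ^ ((3 : ℝ) / 2)) := fun j _ => by
    rw [latitudePoint_sub_odot_mul hσ hz, hodot, add_sub_add_left_eq_sub]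
    ring
  simp only [curvedAcceleration]
  rw [deriv_deriv_latitudePoint]
  simp only [deriv_latitudePoint]
  rw [sum_congr rfl hterm, sum_add_distrib, ← mul_sum, ← mul_sum, hsin, hcos,
    odot_latitudePoint, sub_self, cos_zero]
  ring

end Equations

section Polygon

variable {n : ℕ}

-- Zero-based: vertex `j` is the paper's vertex `j + 1`, at angle `α_{j+1}`.
def polygonAngle (n : ℕ) (j : Fin n) : ℝ := 2 * π * ((j : ℕ) : ℝ) / n

theorem Function.Periodic.polygonAngle_sub {H : ℝ → ℝ} (hH : H.Periodic (2 * π))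
    (i j : Fin n) : H (polygonAngle n (j - i)) = H (polygonAngle n j - polygonAngle n i) := by
  have hn : (n : ℝ) ≠ 0 := by have := i.pos; positivity
  rcases le_or_gt i j with hij | hij
  · rw [polygonAngle, Fin.sub_val_of_le hij, Nat.cast_sub hij]
    congr 1
    simp only [polygonAngle]
    ring
  · rw [polygonAngle, Fin.coe_sub_iff_lt.mpr hij, Nat.cast_sub (by omega), Nat.cast_add,
      ← hH (polygonAngle n j - polygonAngle n i)]
    congr 1
    simp only [polygonAngle]
    field_simp
    ring

theorem sum_erase_polygonAngle_sub {H : ℝ → ℝ} (hH : H.Periodic (2 * π)) [NeZero n]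
    (i : Fin n) :
    ∑ j ∈ univ.erase i, H (polygonAngle n j - polygonAngle n i) =
      ∑ j ∈ univ.erase 0, H (polygonAngle n j) :=
  sum_equiv (Equiv.subRight i) (by simp [sub_eq_zero])
    fun j _ => (hH.polygonAngle_sub i j).symm

theorem sum_erase_polygonAngle_sub_eq_zero {H : ℝ → ℝ} (hH : H.Periodic (2 * π))
    (hodd : ∀ x, H (-x) = -H x) [NeZero n] (i : Fin n) :
    ∑ j ∈ univ.erase i, H (polygonAngle n j - polygonAngle n i) = 0 := by
  have hθ0 : polygonAngle n 0 = 0 := by simp [polygonAngle]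
  have hreflect : ∑ j ∈ univ.erase (0 : Fin n), -H (polygonAngle n j) =
      ∑ j ∈ univ.erase (0 : Fin n), H (polygonAngle n j) :=
    sum_equiv (Equiv.neg _) (by simp) fun j _ => by
      rw [Equiv.neg_apply, ← zero_sub j, hH.polygonAngle_sub, hθ0, zero_sub, hodd]
  rw [sum_neg_distrib] at hreflect
  rw [sum_erase_polygonAngle_sub hH]
  linarith

theorem cos_polygonAngle_lt_one [NeZero n] {j : Fin n} (hj : j ≠ 0) :
    cos (polygonAngle n j) < 1 := by
  have hj₀ : 0 < ((j : ℕ) : ℝ) := by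
    exact_mod_cast Fin.val_pos_iff.2 ((Fin.pos_iff_ne_zero' j).2 hj)
  have hjn : ((j : ℕ) : ℝ) < n := by exact_mod_cast j.isLt
  have hpos : 0 < polygonAngle n j := by
    unfold polygonAngle
    have := hj₀.trans hjn
    positivity
  have hlt : polygonAngle n j < 2 * π := by
    rw [polygonAngle, div_lt_iff₀ (hj₀.trans hjn)]
    gcongr
  refine (cos_le_one _).lt_of_ne fun h => hpos.ne' ?_
  exact (cos_eq_one_iff_of_lt_of_lt (by linarith) hlt).1 h

theorem cos_polygonAngle_sub_lt_one {i j : Fin n} (hij : i ≠ j) :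
    cos (polygonAngle n j - polygonAngle n i) < 1 := by
  have : NeZero n := NeZero.of_pos i.pos
  rw [← cos_periodic.polygonAngle_sub]
  exact cos_polygonAngle_lt_one (sub_ne_zero.2 hij.symm)

end Polygon

end

theorem polygonal_elliptic_relative_equilibria_exist
    (σ : ℝ) (hσ : σ = 1 ∨ σ = -1) (n : ℕ) (hn : 2 ≤ n)
    (m r : ℝ) (hm : 0 < m) (hr : 0 < r) (hr1 : σ = 1 → r < 1) :
    ∃ A : ℝ, 0 < A ∧
      ∀ q : Fin n → ℝ → Fin 4 → ℝ,
        (∀ (i : Fin n) (t : ℝ),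
          q i t = ![r * Real.cos (A * t + 2 * π * ((i : ℕ) : ℝ) / n),
                    r * Real.sin (A * t + 2 * π * ((i : ℕ) : ℝ) / n),
                    0, Real.sqrt (1 - σ * r ^ 2)]) →
        -- the bodies lie on `M³_σ`
        (∀ i t, odot σ (q i t) (q i t) = σ) ∧
        -- singularity avoidance: `σ - σ(q_i ⊙ q_j)² > 0` for `i ≠ j`
        (∀ i j, i ≠ j → ∀ t, 0 < σ - σ * (odot σ (q i t) (q j t)) ^ 2) ∧
        -- the equations of motion with all masses equal to `m`
        (∀ i t k,
          deriv (deriv fun s => q i s k) t =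
            (∑ j ∈ Finset.univ.erase i,
              m * (q j t k - σ * odot σ (q i t) (q j t) * q i t k) /
                (σ - σ * (odot σ (q i t) (q j t)) ^ 2) ^ ((3 : ℝ) / 2))
            - σ * odot σ (fun l => deriv (fun s => q i s l) t)
                (fun l => deriv (fun s => q i s l) t) * q i t k) := by
  have : NeZero n := ⟨by omega⟩
  have hσ2 : σ ^ 2 = 1 := by rcases hσ with rfl | rfl <;> norm_num
  set z := √(1 - σ * r ^ 2)
  have hz : z ^ 2 + σ * r ^ 2 = 1 := by
    rw [sq_sqrt]
    · ring
    rcases hσ with rfl | rfl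
    · nlinarith [hr1 rfl]
    · nlinarith
  have hsep {x : ℝ} (hx : cos x < 1) : 0 < σ - σ * (r ^ 2 * cos x + σ * z ^ 2) ^ 2 :=
    sub_mul_sq_pos_of_lt_one hσ hr hr1 hz (neg_one_le_cos x) hx
  set S := ∑ j ∈ univ.erase (0 : Fin n), m * (1 - cos (polygonAngle n j)) /
    (σ - σ * (r ^ 2 * cos (polygonAngle n j) + σ * z ^ 2) ^ 2) ^ ((3 : ℝ) / 2)
  have hS : 0 < S := sum_pos (fun j hj => div_pos
      (mul_pos hm (sub_pos.2 (cos_polygonAngle_lt_one (ne_of_mem_erase hj))))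
      (rpow_pos_of_pos (hsep (cos_polygonAngle_lt_one (ne_of_mem_erase hj))) _))
    ⟨⟨1, hn⟩, by simp [Fin.ext_iff]⟩
  refine ⟨√S, sqrt_pos.2 hS, fun q hq => ?_⟩
  obtain rfl : q = fun i t => latitudePoint r z (√S * t + polygonAngle n i) :=
    funext fun i => funext (hq i)
  refine ⟨fun i t => odot_latitudePoint_self hσ2 hz _, fun i j hij t => ?_,
    isCurvedNBodySolution_latitudePoint hσ2 hz (fun _ => m) (polygonAngle n) (fun i => ?_)
      (fun i => ?_)⟩
  · rw [odot_latitudePoint, add_sub_add_left_eq_sub]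
    exact hsep (cos_polygonAngle_sub_lt_one hij)
  · exact sum_erase_polygonAngle_sub_eq_zero
      (H := fun x => m * sin x / (σ - σ * (r ^ 2 * cos x + σ * z ^ 2) ^ 2) ^ ((3 : ℝ) / 2))
      (fun x => by simp) (fun x => by simp [neg_div]) i
  · rw [sq_sqrt hS.le]
    exact sum_erase_polygonAngle_sub
      (H := fun x => m * (1 - cos x) / (σ - σ * (r ^ 2 * cos x + σ * z ^ 2) ^ 2) ^ ((3 : ℝ) / 2))
      (fun x => by simp) i
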